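/- Let X be an R-module such that every subquotient of X is stable for descending filtrations and stable for ascending filtrations. Suppose X = A⁰ ⊇ A¹ ⊇ ⋯ ⊇ Aⁿ = 0 and X = B⁰ ⊇ B¹ ⊇ ⋯ ⊇ Bᵐ = 0 are two finite chains of submodules such that every quotient Aⁱ/Aⁱ⁺¹ and every quotient Bⁱ/Bⁱ⁺¹ admits a (descending or ascending) ℤ-composition series with factors among (S_j). Then for every j ∈ J, the total multiplicity of S_j, i.e., the sum over the steps of the chain of the multiplicities of S_j in the chosen ℤ-composition series of the quotients, is the same for both chains. In particular the composition factors of X, counted with multiplicity, are independent of all choices. -/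

import Mathlib

/-- The subquotient `A/B` of an ambient module. -/
abbrev quotSub {R X : Type*} [Ring R] [AddCommGroup X] [Module R X]
    (A B : Submodule R X) : Type _ :=
  ↥A ⧸ B.comap A.subtype

/-- A module `Y` is *stable for descending filtrations*. -/
def StableDesc (R Y : Type*) [Ring R] [AddCommGroup Y] [Module R Y] : Prop :=
  ∀ C D : ℕ → Submodule R Y, C 0 = ⊤ → D 0 = ⊤ →
    (∀ i, C (i + 1) ≤ C i) → (∀ i, D (i + 1) ≤ D i) →
    (⨅ i, C i) = ⊥ → (⨅ i, D i) = ⊥ →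
    ∀ i, ∃ m, D m ≤ C i

/-- A module `Y` is *stable for ascending filtrations*. -/
def StableAsc (R Y : Type*) [Ring R] [AddCommGroup Y] [Module R Y] : Prop :=
  ∀ C D : ℕ → Submodule R Y, C 0 = ⊥ → D 0 = ⊥ →
    (∀ i, C i ≤ C (i + 1)) → (∀ i, D i ≤ D (i + 1)) →
    (⨆ i, C i) = ⊤ → (⨆ i, D i) = ⊤ →
    ∀ i, ∃ m, D i ≤ C m

/-- The `m`-th quotient of a chain `c`, read descending (`desc = true`, giving `c m / c (m+1)`)
or ascending (`desc = false`, giving `c (m+1) / c m`). -/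
abbrev stepQuot {R Y : Type*} [Ring R] [AddCommGroup Y] [Module R Y]
    (desc : Bool) (c : ℕ → Submodule R Y) (m : ℕ) : Type _ :=
  quotSub (c (if desc then m else m + 1)) (c (if desc then m + 1 else m))

/-- `c` is a (descending if `desc`, ascending otherwise) ℤ-composition series of `Y` with
factors among the family `S` and finite multiplicities. -/
def IsZCompSeries {R Y J : Type*} [Ring R] [AddCommGroup Y] [Module R Y]
    (S : J → Type*) [∀ j, AddCommGroup (S j)] [∀ j, Module R (S j)]
    (desc : Bool) (c : ℕ → Submodule R Y) : Prop :=
  (if desc then c 0 = ⊤ ∧ (∀ m, c (m + 1) ≤ c m) ∧ (⨅ m, c m) = ⊥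
    else c 0 = ⊥ ∧ (∀ m, c m ≤ c (m + 1)) ∧ (⨆ m, c m) = ⊤) ∧
  (∀ m, Subsingleton (stepQuot desc c m) ∨
    ∃ j, Nonempty (stepQuot desc c m ≃ₗ[R] S j)) ∧
  (∀ j, {m | Nonempty (stepQuot desc c m ≃ₗ[R] S j)}.Finite)

/-- The multiplicity of the simple factor `S j` in the series `c`. -/
noncomputable def multOf {R Y J : Type*} [Ring R] [AddCommGroup Y] [Module R Y]
    (S : J → Type*) [∀ j, AddCommGroup (S j)] [∀ j, Module R (S j)]
    (desc : Bool) (c : ℕ → Submodule R Y) (j : J) : ℕ :=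
  {m | Nonempty (stepQuot desc c m ≃ₗ[R] S j)}.ncard

/-! Comparing a ℤ-composition series with the two-step filtration `⊤ ⊇ ⊥ ⊇ ⊥ ⊇ ⋯` (or
`⊥ ⊆ ⊤ ⊆ ⊤ ⊆ ⋯`), stability shows that it reaches `0` (resp. the whole module) after finitely
many steps. Hence each quotient `Aⁱ/Aⁱ⁺¹` carries an honest composition series with the same
multiplicities; lifting these to `X` and concatenating them gives a composition series of `X`
in which `S j` occurs exactly the total multiplicity along the chain. By the Jordan–Hölder
theorem this count does not depend on the chain. -/

section Subquotients

variable {R : Type*} [Ring R] {Y Z : Type*} [AddCommGroup Y] [Module R Y]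
  [AddCommGroup Z] [Module R Z]

lemma quotSub_subsingleton_iff (A B : Submodule R Y) : Subsingleton (quotSub A B) ↔ A ≤ B := by
  rw [Submodule.Quotient.subsingleton_iff, Submodule.comap_subtype_eq_top]

lemma not_nonempty_quotSub_equiv_of_le {A B : Submodule R Y} (h : A ≤ B)
    (T : Type*) [AddCommGroup T] [Module R T] [Nontrivial T] :
    ¬Nonempty (quotSub A B ≃ₗ[R] T) := by
  have := (quotSub_subsingleton_iff A B).mpr h
  exact fun ⟨e⟩ => not_subsingleton T e.symm.toEquiv.subsingleton

lemma nonempty_quotSub_comap_equiv (φ : Y →ₗ[R] Z) (W W' : Submodule R Z)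
    (h : W' ≤ LinearMap.range φ) :
    Nonempty (quotSub (W'.comap φ) (W.comap φ) ≃ₗ[R] quotSub W' W) := by
  let g : W'.comap φ →ₗ[R] quotSub W' W := (W.comap W'.subtype).mkQ ∘ₗ φ.restrict fun _ hx => hx
  have hg : Function.Surjective g := by
    intro q
    obtain ⟨w, rfl⟩ := Submodule.mkQ_surjective _ q
    obtain ⟨y, hy⟩ := h w.2
    exact ⟨⟨y, by simp [hy]⟩, congrArg Submodule.Quotient.mk (Subtype.ext hy)⟩
  have hker : LinearMap.ker g = (W.comap φ).comap (W'.comap φ).subtype := by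
    ext x
    simp [g, Submodule.Quotient.mk_eq_zero]
  exact ⟨(Submodule.quotEquivOfEq _ _ hker.symm).trans (g.quotKerEquivOfSurjective hg)⟩

lemma nonempty_quotSub_map_equiv {ι : Y →ₗ[R] Z} (hι : Function.Injective ι)
    (W W' : Submodule R Y) : Nonempty (quotSub (W'.map ι) (W.map ι) ≃ₗ[R] quotSub W' W) := by
  have := nonempty_quotSub_comap_equiv ι (W.map ι) (W'.map ι) LinearMap.map_le_range
  rw [Submodule.comap_map_eq_of_injective hι, Submodule.comap_map_eq_of_injective hι] at this
  exact this.map LinearEquiv.symm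

lemma covBy_of_quotSub_equiv {A B : Submodule R Y} {C D : Submodule R Z} (hBA : B ≤ A)
    (hDC : D ⋖ C) (e : quotSub A B ≃ₗ[R] quotSub C D) : B ⋖ A := by
  have := (covBy_iff_quot_is_simple hDC.le).mp hDC
  exact (covBy_iff_quot_is_simple hBA).mpr (IsSimpleModule.congr e)

end Subquotients

namespace CompositionSeries

variable {R : Type*} [Ring R] {Y Z : Type*} [AddCommGroup Y] [Module R Y]
  [AddCommGroup Z] [Module R Z] (T : Type*) [AddCommGroup T] [Module R T]

open Classical in
noncomputable def factorCount (s : CompositionSeries (Submodule R Y)) : ℕ :=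
  (Finset.univ.filter fun i : Fin s.length =>
    Nonempty (quotSub (s i.succ) (s i.castSucc) ≃ₗ[R] T)).card

open Classical in
lemma factorCount_snoc (s : CompositionSeries (Submodule R Y)) (x : Submodule R Y)
    (h : s.last ⋖ x) :
    factorCount T (s.snoc x h) =
      factorCount T s + if Nonempty (quotSub x s.last ≃ₗ[R] T) then 1 else 0 := by
  have hsum : factorCount T (s.snoc x h) = ∑ i : Fin (s.length + 1),
      if Nonempty (quotSub (s.snoc x h i.succ) (s.snoc x h i.castSucc) ≃ₗ[R] T) then 1 else 0 :=
    Finset.card_filter _ _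
  rw [hsum, Fin.sum_univ_castSucc, factorCount, Finset.card_filter]
  congr 1
  · refine Finset.sum_congr rfl fun i _ => ?_
    erw [Fin.succ_castSucc, RelSeries.snoc_castSucc, RelSeries.snoc_castSucc]
  · erw [Fin.succ_last, RelSeries.last_snoc', RelSeries.snoc_castSucc]
    rfl

open Classical in
lemma factorCount_smash {s t : CompositionSeries (Submodule R Y)} (h : s.last = t.head) :
    factorCount T (s.smash t h) = factorCount T s + factorCount T t := by
  have hsum : factorCount T (s.smash t h) = ∑ i : Fin (s.length + t.length),
      if Nonempty (quotSub (s.smash t h i.succ) (s.smash t h i.castSucc) ≃ₗ[R] T) then 1 else 0 :=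
    Finset.card_filter _ _
  rw [hsum, Fin.sum_univ_add, factorCount, factorCount, Finset.card_filter, Finset.card_filter]
  congr 1 <;> refine Finset.sum_congr rfl fun i _ => ?_
  · rw [RelSeries.smash_succ_castAdd, RelSeries.smash_castAdd]
  · rw [RelSeries.smash_succ_natAdd, RelSeries.smash_natAdd]

lemma Equivalent.factorCount_eq {s t : CompositionSeries (Submodule R Y)} (h : s.Equivalent t) :
    factorCount T s = factorCount T t := by
  obtain ⟨e, he⟩ := h
  refine Finset.card_equiv e fun i => ?_
  have f := (he i).linearEquiv
  simp only [Finset.mem_filter, Finset.mem_univ, true_and]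
  exact ⟨fun ⟨g⟩ => ⟨f.symm.trans g⟩, fun ⟨g⟩ => ⟨f.trans g⟩⟩

lemma exists_map (F : Submodule R Z → Submodule R Y) (hF : Monotone F)
    (hquot : ∀ W W', Nonempty (quotSub (F W') (F W) ≃ₗ[R] quotSub W' W))
    (s : CompositionSeries (Submodule R Z)) :
    ∃ t : CompositionSeries (Submodule R Y),
      t.head = F s.head ∧ t.last = F s.last ∧ factorCount T t = factorCount T s := by
  refine ⟨⟨s.length, F ∘ s, fun i => covBy_of_quotSub_equiv (hF (s.lt_succ i).le) (s.step i)
    (hquot _ _).some⟩, rfl, rfl, ?_⟩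
  unfold factorCount
  congr 1
  ext i
  obtain ⟨e⟩ := hquot (s i.castSucc) (s i.succ)
  simp only [Finset.mem_filter, Finset.mem_univ, true_and]
  exact ⟨fun ⟨g⟩ => ⟨e.symm.trans g⟩, fun ⟨g⟩ => ⟨e.trans g⟩⟩

end CompositionSeries

section Chains

variable {R : Type*} [Ring R] {Y : Type*} [AddCommGroup Y] [Module R Y]
  (T : Type*) [AddCommGroup T] [Module R T] [Nontrivial T]

open CompositionSeries

open Classical in
lemma exists_compositionSeries_of_monotone_chain (f : ℕ → Submodule R Y) (K : ℕ)
    (hf : ∀ m < K, f m = f (m + 1) ∨ f m ⋖ f (m + 1)) :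
    ∃ s : CompositionSeries (Submodule R Y), s.head = f 0 ∧ s.last = f K ∧
      factorCount T s = ((Finset.range K).filter fun m =>
        Nonempty (quotSub (f (m + 1)) (f m) ≃ₗ[R] T)).card := by
  induction K with
  | zero => exact ⟨RelSeries.singleton _ (f 0), rfl, rfl, rfl⟩
  | succ K ih =>
    obtain ⟨s, hhead, hlast, hcount⟩ := ih fun m hm => hf m (by omega)
    rw [Finset.card_filter, Finset.sum_range_succ, ← Finset.card_filter, ← hcount]
    rcases hf K K.lt_succ_self with heq | hcov
    · refine ⟨s, hhead, hlast.trans heq, ?_⟩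
      rw [if_neg (not_nonempty_quotSub_equiv_of_le heq.ge T), add_zero]
    · refine ⟨s.snoc (f (K + 1)) (hlast ▸ hcov), (s.head_snoc _ _).trans hhead,
        s.last_snoc _ _, ?_⟩
      rw [factorCount_snoc, hlast]

open Classical in
lemma exists_compositionSeries_of_antitone_chain (f : ℕ → Submodule R Y) (K : ℕ)
    (hf : ∀ m < K, f (m + 1) = f m ∨ f (m + 1) ⋖ f m) :
    ∃ s : CompositionSeries (Submodule R Y), s.head = f K ∧ s.last = f 0 ∧
      factorCount T s = ((Finset.range K).filter fun m =>
        Nonempty (quotSub (f m) (f (m + 1)) ≃ₗ[R] T)).card := by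
  induction K generalizing f with
  | zero => exact ⟨RelSeries.singleton _ (f 0), rfl, rfl, rfl⟩
  | succ K ih =>
    obtain ⟨s, hhead, hlast, hcount⟩ := ih (fun m => f (m + 1)) fun m hm => hf (m + 1) (by omega)
    rw [Finset.card_filter, Finset.sum_range_succ', ← Finset.card_filter, ← hcount]
    rcases hf 0 K.succ_pos with heq | hcov
    · refine ⟨s, hhead, hlast.trans heq, ?_⟩
      rw [if_neg (not_nonempty_quotSub_equiv_of_le heq.ge T), add_zero]
    · refine ⟨s.snoc (f 0) (hlast ▸ hcov), (s.head_snoc _ _).trans hhead, s.last_snoc _ _, ?_⟩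
      rw [factorCount_snoc, hlast]

end Chains

section ZComposition

variable {R : Type*} [Ring R] {Y : Type*} [AddCommGroup Y] [Module R Y]

lemma StableDesc.exists_eq_bot (h : StableDesc R Y) {c : ℕ → Submodule R Y} (h0 : c 0 = ⊤)
    (hc : ∀ m, c (m + 1) ≤ c m) (hinf : ⨅ m, c m = ⊥) : ∃ K, ∀ m, K ≤ m → c m = ⊥ := by
  obtain ⟨K, hK⟩ := h (fun m => if m = 0 then ⊤ else ⊥) c rfl h0 (fun m => by simp) hc
    (le_bot_iff.mp (iInf_le_of_le 1 le_rfl)) hinf 1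
  exact ⟨K, fun m hm => le_bot_iff.mp ((antitone_nat_of_succ_le hc hm).trans hK)⟩

lemma StableAsc.exists_eq_top (h : StableAsc R Y) {c : ℕ → Submodule R Y} (h0 : c 0 = ⊥)
    (hc : ∀ m, c m ≤ c (m + 1)) (hsup : ⨆ m, c m = ⊤) : ∃ K, ∀ m, K ≤ m → c m = ⊤ := by
  obtain ⟨K, hK⟩ := h c (fun m => if m = 0 then ⊥ else ⊤) h0 rfl hc (fun m => by simp)
    hsup (top_le_iff.mp (le_iSup_of_le 1 le_rfl)) 1
  exact ⟨K, fun m hm => top_le_iff.mp (hK.trans (monotone_nat_of_le_succ hc hm))⟩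

variable {J : Type*} {S : J → Type*} [∀ j, AddCommGroup (S j)] [∀ j, Module R (S j)]

lemma eq_or_covBy_of_quotSub (hsimple : ∀ j, IsSimpleModule R (S j)) {A B : Submodule R Y}
    (hBA : B ≤ A) (h : Subsingleton (quotSub A B) ∨ ∃ j, Nonempty (quotSub A B ≃ₗ[R] S j)) :
    B = A ∨ B ⋖ A := by
  rcases h with h | ⟨j, ⟨e⟩⟩
  · exact .inl (hBA.antisymm ((quotSub_subsingleton_iff A B).mp h))
  · exact .inr ((covBy_iff_quot_is_simple hBA).mpr (IsSimpleModule.congr e))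

open Classical in
lemma multOf_eq_card_filter {desc : Bool} {c : ℕ → Submodule R Y} {K : ℕ}
    (hK : ∀ m, K ≤ m → Subsingleton (stepQuot desc c m)) (j : J) [Nontrivial (S j)] :
    multOf S desc c j = ((Finset.range K).filter fun m =>
      Nonempty (stepQuot desc c m ≃ₗ[R] S j)).card := by
  rw [multOf, ← Set.ncard_coe_finset, Finset.coe_filter]
  congr 1
  ext m
  simp only [Set.mem_ofPred_eq, Finset.mem_range, iff_and_self]
  intro ⟨e⟩
  by_contra! hm
  have := hK m hm
  exact not_subsingleton (S j) e.symm.toEquiv.subsingleton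

lemma IsZCompSeries.exists_compositionSeries (hsimple : ∀ j, IsSimpleModule R (S j))
    (hsd : StableDesc R Y) (hsa : StableAsc R Y) {desc : Bool} {c : ℕ → Submodule R Y}
    (hc : IsZCompSeries S desc c) (j : J) :
    ∃ s : CompositionSeries (Submodule R Y), s.head = ⊥ ∧ s.last = ⊤ ∧
      CompositionSeries.factorCount (S j) s = multOf S desc c j := by
  obtain ⟨hbound, hstep, -⟩ := hc
  have := (hsimple j).nontrivial
  cases desc with
  | true =>
    obtain ⟨h0, hanti, hinf⟩ := hbound
    obtain ⟨K, hK⟩ := hsd.exists_eq_bot h0 hanti hinf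
    obtain ⟨s, hhead, hlast, hcount⟩ := exists_compositionSeries_of_antitone_chain (S j) c K
      fun m _ => eq_or_covBy_of_quotSub hsimple (hanti m) (hstep m)
    refine ⟨s, hhead.trans (hK K le_rfl), hlast.trans h0, hcount.trans ?_⟩
    refine (multOf_eq_card_filter (desc := true) (c := c) (fun m hm => ?_) j).symm
    exact (quotSub_subsingleton_iff _ _).mpr ((hK m hm).trans_le bot_le)
  | false =>
    obtain ⟨h0, hmono, hsup⟩ := hbound
    obtain ⟨K, hK⟩ := hsa.exists_eq_top h0 hmono hsup
    obtain ⟨s, hhead, hlast, hcount⟩ := exists_compositionSeries_of_monotone_chain (S j) c K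
      fun m _ => eq_or_covBy_of_quotSub hsimple (hmono m) (hstep m)
    refine ⟨s, hhead.trans h0, hlast.trans (hK K le_rfl), hcount.trans ?_⟩
    refine (multOf_eq_card_filter (desc := false) (c := c) (fun m hm => ?_) j).symm
    exact (quotSub_subsingleton_iff _ _).mpr (le_top.trans_eq (hK m hm).symm)

end ZComposition

section Filtration

variable {R : Type*} [Ring R] {X : Type*} [AddCommGroup X] [Module R X]

open CompositionSeries

lemma exists_compositionSeries_lift {A B : Submodule R X} (hBA : B ≤ A)
    (s : CompositionSeries (Submodule R (quotSub A B))) (hhead : s.head = ⊥) (hlast : s.last = ⊤)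
    (T : Type*) [AddCommGroup T] [Module R T] :
    ∃ t : CompositionSeries (Submodule R X),
      t.head = B ∧ t.last = A ∧ factorCount T t = factorCount T s := by
  let π := (B.comap A.subtype).mkQ
  obtain ⟨t, hthead, htlast, hcount⟩ := s.exists_map T (fun W => (W.comap π).map A.subtype)
    (fun _ _ h => Submodule.map_mono (Submodule.comap_mono h))
    fun W W' => ⟨(nonempty_quotSub_map_equiv A.injective_subtype _ _).some.trans
      (nonempty_quotSub_comap_equiv π W W' (by simp [π])).some⟩
  refine ⟨t, ?_, ?_, hcount⟩
  · rw [hthead, hhead, Submodule.comap_bot, Submodule.ker_mkQ, Submodule.map_comap_subtype,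
      inf_eq_right.mpr hBA]
  · rw [htlast, hlast, Submodule.comap_top, Submodule.map_subtype_top]

variable {J : Type*} {S : J → Type*} [∀ j, AddCommGroup (S j)] [∀ j, Module R (S j)]

lemma exists_compositionSeries_of_filtration (hsimple : ∀ j, IsSimpleModule R (S j))
    {N : ℕ} {A : ℕ → Submodule R X} (hA0 : A 0 = ⊤) (hA : ∀ i < N, A (i + 1) ≤ A i)
    (hstable : ∀ i < N, StableDesc R (quotSub (A i) (A (i + 1))) ∧
      StableAsc R (quotSub (A i) (A (i + 1))))
    {d : ℕ → Bool} {c : ∀ i, ℕ → Submodule R (quotSub (A i) (A (i + 1)))}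
    (hc : ∀ i < N, IsZCompSeries S (d i) (c i)) (j : J) :
    ∃ t : CompositionSeries (Submodule R X), t.head = A N ∧ t.last = ⊤ ∧
      factorCount (S j) t = ∑ i ∈ Finset.range N, multOf S (d i) (c i) j := by
  induction N with
  | zero => exact ⟨RelSeries.singleton _ ⊤, hA0.symm, rfl, rfl⟩
  | succ N ih =>
    obtain ⟨t, hthead, htlast, htcount⟩ := ih (fun i hi => hA i (by omega))
      (fun i hi => hstable i (by omega)) fun i hi => hc i (by omega)
    obtain ⟨hsd, hsa⟩ := hstable N N.lt_succ_self
    obtain ⟨s, hshead, hslast, hscount⟩ :=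
      (hc N N.lt_succ_self).exists_compositionSeries hsimple hsd hsa j
    obtain ⟨u, huhead, hulast, hucount⟩ :=
      exists_compositionSeries_lift (hA N N.lt_succ_self) s hshead hslast (S j)
    refine ⟨u.smash t (hulast.trans hthead.symm), (RelSeries.head_smash _).trans huhead,
      (RelSeries.last_smash _).trans htlast, ?_⟩
    rw [factorCount_smash, hucount, hscount, htcount, Finset.sum_range_succ, add_comm]

end Filtration

theorem statement19_general {R : Type*} [Ring R] {X : Type*} [AddCommGroup X] [Module R X]
    {J : Type*} (S : J → Type*) [∀ j, AddCommGroup (S j)] [∀ j, Module R (S j)]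
    (hsimple : ∀ j, IsSimpleModule R (S j))
    (hstable : ∀ A B : Submodule R X, B ≤ A →
      StableDesc R (quotSub A B) ∧ StableAsc R (quotSub A B))
    (N M : ℕ) (A B : ℕ → Submodule R X)
    (hA0 : A 0 = ⊤) (hAN : A N = ⊥) (hAdesc : ∀ i, i < N → A (i + 1) ≤ A i)
    (hB0 : B 0 = ⊤) (hBM : B M = ⊥) (hBdesc : ∀ i, i < M → B (i + 1) ≤ B i)
    (dA : ℕ → Bool) (cA : ∀ i : ℕ, ℕ → Submodule R (quotSub (A i) (A (i + 1))))
    (hcA : ∀ i, i < N → IsZCompSeries S (dA i) (cA i))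
    (dB : ℕ → Bool) (cB : ∀ i : ℕ, ℕ → Submodule R (quotSub (B i) (B (i + 1))))
    (hcB : ∀ i, i < M → IsZCompSeries S (dB i) (cB i)) :
    ∀ j, ∑ i ∈ Finset.range N, multOf S (dA i) (cA i) j
      = ∑ i ∈ Finset.range M, multOf S (dB i) (cB i) j := by
  intro j
  obtain ⟨tA, hAhead, hAlast, hAcount⟩ := exists_compositionSeries_of_filtration hsimple hA0
    hAdesc (fun i hi => hstable _ _ (hAdesc i hi)) hcA j
  obtain ⟨tB, hBhead, hBlast, hBcount⟩ := exists_compositionSeries_of_filtration hsimple hB0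
    hBdesc (fun i hi => hstable _ _ (hBdesc i hi)) hcB j
  have hJH : tA.Equivalent tB := CompositionSeries.jordan_holder tA tB
    (by rw [hAhead, hBhead, hAN, hBM]) (hAlast.trans hBlast.symm)
  rw [← hAcount, ← hBcount, hJH.factorCount_eq (S j)]

/-- Let `X` be an `R`-module whose subquotients are all stable for
descending and ascending filtrations, and let `(S_j)` be a family of pairwise non-isomorphic
simple modules.  Given two finite chains `X = A⁰ ⊇ ⋯ ⊇ Aᴺ = 0` and `X = B⁰ ⊇ ⋯ ⊇ Bᴹ = 0`
such that each quotient admits a (descending or ascending) ℤ-composition series with factors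
among the `S_j`, the total multiplicity of each `S_j` (summed over the steps) is the same for
both chains. -/
theorem statement19 {R : Type*} [Ring R] {X : Type*} [AddCommGroup X] [Module R X]
    {J : Type*} (S : J → Type*) [∀ j, AddCommGroup (S j)] [∀ j, Module R (S j)]
    (hsimple : ∀ j, IsSimpleModule R (S j))
    (hpair : ∀ j j', j ≠ j' → IsEmpty (S j ≃ₗ[R] S j'))
    (hstable : ∀ A B : Submodule R X, B ≤ A →
      StableDesc R (quotSub A B) ∧ StableAsc R (quotSub A B))
    (N M : ℕ) (A B : ℕ → Submodule R X)
    (hA0 : A 0 = ⊤) (hAN : A N = ⊥) (hAdesc : ∀ i, i < N → A (i + 1) ≤ A i)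
    (hB0 : B 0 = ⊤) (hBM : B M = ⊥) (hBdesc : ∀ i, i < M → B (i + 1) ≤ B i)
    (dA : ℕ → Bool) (cA : ∀ i : ℕ, ℕ → Submodule R (quotSub (A i) (A (i + 1))))
    (hcA : ∀ i, i < N → IsZCompSeries S (dA i) (cA i))
    (dB : ℕ → Bool) (cB : ∀ i : ℕ, ℕ → Submodule R (quotSub (B i) (B (i + 1))))
    (hcB : ∀ i, i < M → IsZCompSeries S (dB i) (cB i)) :
    ∀ j, ∑ i ∈ Finset.range N, multOf S (dA i) (cA i) j
      = ∑ i ∈ Finset.range M, multOf S (dB i) (cB i) j :=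
  statement19_general S hsimple hstable N M A B hA0 hAN hAdesc hB0 hBM hBdesc dA cA hcA dB cB hcB
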